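/- Let k be a field of characteristic zero and f ∈ k[x,y,z] with finite Milnor number. Every quasiclassical datum (p, S), consisting of p ∈ k[x,y,z] and a bivector field S with [f, S] = 0, automatically satisfies [S, S] = 0 and [f, [p, S]] ∈ Im(ad_f on bivectors); i.e., every first-order noncommutative unfolding of f given by (p,S) with [f,S]=0 extends to second order. -/

import Mathlib

open MvPolynomial

/- Polyvector fields on affine `n`-space in coordinates.  Since `T_A = Der_k(A)` is free on
`∂₁, …, ∂ₙ`, a `p`-vector field is given by its alternating array of coefficients.  The
Schouten–Nijenhuis bracket is given by the classical coordinate formulas below. -/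

variable {k : Type*} [CommRing k] {n : ℕ}

/-- The coefficients of the Schouten bracket `[g, S]` (contraction of the bivector `S` with
`dg`): `[g,S]_j = ∑ᵢ S i j ∂ᵢ g`.  It is a vector field. -/
noncomputable def schFnBiv (g : MvPolynomial (Fin n) k)
    (S : Fin n → Fin n → MvPolynomial (Fin n) k) : Fin n → MvPolynomial (Fin n) k :=
  fun j => ∑ i, S i j * pderiv i g

/-- The coefficients of the Schouten bracket `[g, T]` of a function with a trivector `T`
(contraction with `dg`): it is a bivector, `[g,T]_{jk} = ∑ᵢ T i j k ∂ᵢ g`. -/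
noncomputable def schFnTriv (g : MvPolynomial (Fin n) k)
    (T : Fin n → Fin n → Fin n → MvPolynomial (Fin n) k) :
    Fin n → Fin n → MvPolynomial (Fin n) k :=
  fun j l => ∑ i, T i j l * pderiv i g

/-- The coefficients of the Schouten bracket `[S, S]` of a bivector with itself; it is a
trivector with components `[S,S]^{ijk} = 2 ∑ₗ (S l i ∂ₗ S j k + S l j ∂ₗ S k i + S l k ∂ₗ S i j)`
(we drop the overall factor 2, harmless in characteristic zero). -/
noncomputable def schBivBiv (S : Fin n → Fin n → MvPolynomial (Fin n) k) :
    Fin n → Fin n → Fin n → MvPolynomial (Fin n) k :=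
  fun i j l => ∑ m, (S m i * pderiv m (S j l) + S m j * pderiv m (S l i) +
    S m l * pderiv m (S i j))

/-- A trivector array is alternating. -/
def IsAltTriv (T : Fin n → Fin n → Fin n → MvPolynomial (Fin n) k) : Prop :=
  ∀ i j l, T i j l = - T j i l ∧ T i j l = - T i l j

/-- A bivector array is antisymmetric. -/
def IsAltBiv (S : Fin n → Fin n → MvPolynomial (Fin n) k) : Prop :=
  ∀ i j, S i j = - S j i

/-! In three variables a bivector `S` is a vector field `s` in disguise (`∂ᵢ∧∂ⱼ ↔ ∂ₖ`), and
`[f, S] = 0` reads `s × ∇f = 0`. If `q` divides all partials of `f`, then `k[x,y,z]/(q)` is a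
quotient of the Milnor algebra, hence finite-dimensional; so each coordinate `xᵢ` is algebraic
modulo `q`, i.e. `q` divides a nonzero polynomial in `xᵢ` alone, for every `i`, and `q` is a unit.
The partials being coprime in the UFD `k[x,y,z]`, the vector `s` proportional to `∇f` is `g ∇f`,
that is `S = [f, g ∂ₓ∧∂ᵧ∧∂_z]`. Then `[S, S]` is a multiple of `g∇f · curl (g∇f) = 0`, and
`[p, S] = g ∇f × ∇p = [f, S₂]` for the bivector `S₂` of `-g ∇p`. -/

open Matrix

section Divisibility

variable {A : Type*} [CommMonoidWithZero A] [IsCancelMulZero A] [DecompositionMonoid A]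

theorem exists_dvd_and_forall_dvd_of_forall_dvd_mul {ι : Type*} (s : Finset ι)
    {a : ι → A} {d x : A} (hd : d ≠ 0) (h : ∀ j ∈ s, d ∣ x * a j) :
    ∃ d₁ d₂, d = d₁ * d₂ ∧ d₁ ∣ x ∧ ∀ j ∈ s, d₂ ∣ a j := by
  classical
  induction s using Finset.induction_on with
  | empty => exact ⟨1, d, (one_mul d).symm, one_dvd x, by simp⟩
  | insert l s _ ih =>
    obtain ⟨d₁, d₂, rfl, ⟨x', rfl⟩, hd₂⟩ :=
      ih fun j hj => h j (Finset.mem_insert_of_mem hj)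
    have hl : d₂ ∣ x' * a l := by
      rw [← mul_dvd_mul_iff_left (left_ne_zero_of_mul hd), ← mul_assoc]
      exact h l (Finset.mem_insert_self l s)
    obtain ⟨e₁, e₂, he₁, he₂, rfl⟩ := DecompositionMonoid.primal d₂ hl
    refine ⟨d₁ * e₁, e₂, (mul_assoc _ _ _).symm, mul_dvd_mul_left d₁ he₁, ?_⟩
    simp only [Finset.mem_insert, forall_eq_or_imp]
    exact ⟨he₂, fun j hj => (dvd_mul_left e₂ e₁).trans (hd₂ j hj)⟩

theorem dvd_of_forall_dvd_mul {ι : Type*} [Fintype ι] {a : ι → A}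
    (hcop : ∀ q, (∀ i, q ∣ a i) → IsUnit q) {d x : A} (hd : d ≠ 0) (h : ∀ j, d ∣ x * a j) :
    d ∣ x := by
  obtain ⟨d₁, d₂, rfl, hd₁, hd₂⟩ :=
    exists_dvd_and_forall_dvd_of_forall_dvd_mul Finset.univ hd fun j _ => h j
  exact ((hcop d₂ fun i => hd₂ i (Finset.mem_univ i)).mul_right_dvd).2 hd₁

theorem exists_eq_smul_of_mul_eq_mul [Nontrivial A] {ι : Type*} [Fintype ι] {u a : ι → A}
    (hcop : ∀ q, (∀ i, q ∣ a i) → IsUnit q) (h : ∀ i j, u i * a j = u j * a i) :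
    ∃ g : A, u = g • a := by
  obtain ⟨i, hi⟩ : ∃ i, a i ≠ 0 := by
    by_contra! h0
    exact not_isUnit_zero (hcop 0 fun i => by rw [h0 i])
  obtain ⟨g, hg⟩ : a i ∣ u i :=
    dvd_of_forall_dvd_mul hcop hi fun j => ⟨u j, by rw [h, mul_comm]⟩
  refine ⟨g, funext fun j => mul_right_cancel₀ hi ?_⟩
  rw [← h, hg, Pi.smul_apply, smul_eq_mul]
  ac_rfl

end Divisibility

section MilnorAlgebra

variable {σ R K : Type*} [CommRing R] [Field K]

theorem vars_subset_of_dvd [NoZeroDivisors R] {p q : MvPolynomial σ R} (h : p ∣ q)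
    (hq : q ≠ 0) : p.vars ⊆ q.vars := by
  classical
  obtain ⟨r, rfl⟩ := h
  rw [vars_def, vars_def, degrees_mul_eq (left_ne_zero_of_mul hq) (right_ne_zero_of_mul hq)]
  exact Multiset.toFinset_subset.2 (Multiset.subset_of_le (Multiset.le_add_right _ _))

theorem vars_toMvPolynomial_subset (i : σ) (P : Polynomial R) :
    (P.toMvPolynomial i).vars ⊆ {i} := by
  classical
  intro j hj
  rw [← rename_toMvPolynomial (fun _ : Unit => i) ()] at hj
  obtain ⟨_, -, rfl⟩ := Finset.mem_image.1 (vars_rename _ _ hj)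
  exact Finset.mem_singleton_self i

theorem exists_dvd_toMvPolynomial_of_finite_quotient [Nontrivial R] (q : MvPolynomial σ R)
    [Module.Finite R (MvPolynomial σ R ⧸ Ideal.span {q})] (i : σ) :
    ∃ P : Polynomial R, P ≠ 0 ∧ q ∣ P.toMvPolynomial i := by
  obtain ⟨P, hmonic, hP⟩ :=
    Algebra.IsIntegral.isIntegral (R := R) (Ideal.Quotient.mkₐ R (Ideal.span {q}) (X i))
  refine ⟨P, hmonic.ne_zero, ?_⟩
  rw [← Ideal.mem_span_singleton, ← Ideal.Quotient.eq_zero_iff_mem, Polynomial.toMvPolynomial,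
    ← Ideal.Quotient.mkₐ_eq_mk R, ← Polynomial.aeval_algHom_apply]
  exact hP

theorem isUnit_of_finite_quotient_span_singleton [Nontrivial σ] (q : MvPolynomial σ K)
    [Module.Finite K (MvPolynomial σ K ⧸ Ideal.span {q})] : IsUnit q := by
  choose P hP hqP using exists_dvd_toMvPolynomial_of_finite_quotient q
  have hne : ∀ i, (P i).toMvPolynomial i ≠ 0 := fun i =>
    (map_ne_zero_iff _ (Polynomial.toMvPolynomial_injective i)).2 (hP i)
  have hq : q ≠ 0 := ne_zero_of_dvd_ne_zero (hne (Classical.arbitrary σ)) (hqP _)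
  have hvars : q.vars = ∅ := Finset.eq_empty_of_forall_notMem fun j hj => by
    obtain ⟨i, hij⟩ := exists_ne j
    have := vars_toMvPolynomial_subset i (P i) (vars_subset_of_dvd (hqP i) (hne i) hj)
    exact hij (Finset.mem_singleton.1 this).symm
  rw [vars_eq_empty_iff_eq_C.1 hvars] at hq ⊢
  exact (isUnit_iff_ne_zero.2 fun h => hq (by rw [h, map_zero])).map C

theorem isUnit_of_forall_dvd_of_finite_quotient [Nontrivial σ] {s : Set (MvPolynomial σ K)}
    [Module.Finite K (MvPolynomial σ K ⧸ Ideal.span s)] {q : MvPolynomial σ K}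
    (hq : ∀ a ∈ s, q ∣ a) : IsUnit q := by
  have hle : Ideal.span s ≤ Ideal.span {q} :=
    Ideal.span_le.2 fun a ha => Ideal.mem_span_singleton.2 (hq a ha)
  have := Module.Finite.of_surjective (Ideal.Quotient.factorₐ K hle).toLinearMap
    (Ideal.Quotient.factor_surjective hle)
  exact isUnit_of_finite_quotient_span_singleton q

end MilnorAlgebra

section ThreeSpace

noncomputable def grad {σ R : Type*} [CommSemiring R] (f : MvPolynomial σ R) :
    σ → MvPolynomial σ R :=
  fun i => pderiv i f

theorem pderiv_pderiv_comm {σ R : Type*} [CommSemiring R] (i j : σ) (f : MvPolynomial σ R) :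
    pderiv i (pderiv j f) = pderiv j (pderiv i f) := by
  classical
  induction f using MvPolynomial.induction_on with
  | C a => simp
  | add p q hp hq => simp [hp, hq]
  | mul_X q l h =>
    by_cases hli : l = i <;> by_cases hlj : l = j <;> subst_vars <;> simp [*] <;> ring

/-- The bivector `v₀ ∂₁∧∂₂ + v₁ ∂₂∧∂₀ + v₂ ∂₀∧∂₁`. -/
def bivOfVec {R : Type*} [Neg R] [Zero R] (v : Fin 3 → R) : Fin 3 → Fin 3 → R :=
  ![![0, v 2, -v 1], ![-v 2, 0, v 0], ![v 1, -v 0, 0]]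

theorem isAltBiv_bivOfVec (v : Fin 3 → MvPolynomial (Fin 3) k) : IsAltBiv (bivOfVec v) := by
  intro i j
  fin_cases i <;> fin_cases j <;> simp [bivOfVec]

theorem eq_bivOfVec_of_isAltBiv [NoZeroDivisors k] [CharZero k]
    {S : Fin 3 → Fin 3 → MvPolynomial (Fin 3) k} (hS : IsAltBiv S) :
    S = bivOfVec ![S 1 2, S 2 0, S 0 1] := by
  have hdiag : ∀ i, S i i = 0 := fun i => CharZero.eq_neg_self_iff.1 (hS i i)
  funext i j
  fin_cases i <;> fin_cases j <;> simp [bivOfVec, hdiag, hS 1 0, hS 2 1, hS 0 2]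

theorem schFnBiv_bivOfVec (g : MvPolynomial (Fin 3) k) (v : Fin 3 → MvPolynomial (Fin 3) k) :
    schFnBiv g (bivOfVec v) = v ⨯₃ grad g := by
  funext j
  fin_cases j <;>
    simp only [schFnBiv, bivOfVec, cross_apply, grad, Fin.sum_univ_three, Fin.zero_eta,
      Fin.mk_one, Fin.reduceFinMk, Matrix.cons_val] <;> ring

theorem mul_eq_mul_of_cross_eq_zero {R : Type*} [CommRing R] {u v : Fin 3 → R}
    (h : u ⨯₃ v = 0) (i j : Fin 3) : u i * v j = u j * v i := by
  have h₀ : u 1 * v 2 - u 2 * v 1 = 0 := congrFun h 0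
  have h₁ : u 2 * v 0 - u 0 * v 2 = 0 := congrFun h 1
  have h₂ : u 0 * v 1 - u 1 * v 0 = 0 := congrFun h 2
  fin_cases i <;> fin_cases j <;> grind

theorem schBivBiv_bivOfVec_smul_grad (f g : MvPolynomial (Fin 3) k) (i j l : Fin 3) :
    schBivBiv (bivOfVec (g • grad f)) i j l = 0 := by
  have h₀₁ := pderiv_pderiv_comm 0 1 f
  have h₀₂ := pderiv_pderiv_comm 0 2 f
  have h₁₂ := pderiv_pderiv_comm 1 2 f
  fin_cases i <;> fin_cases j <;> fin_cases l <;>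
    simp only [schBivBiv, bivOfVec, grad, Fin.sum_univ_three, Pi.smul_apply, smul_eq_mul,
      Fin.zero_eta, Fin.mk_one, Fin.reduceFinMk, Matrix.cons_val, pderiv_mul, map_neg, map_zero,
      h₀₁, h₀₂, h₁₂] <;> ring

theorem schFnBiv_bivOfVec_smul_grad (f g p : MvPolynomial (Fin 3) k) :
    schFnBiv p (bivOfVec (g • grad f)) = schFnBiv f (bivOfVec (-(g • grad p))) := by
  simp only [schFnBiv_bivOfVec, map_neg, map_smul, LinearMap.neg_apply, LinearMap.smul_apply,
    ← smul_neg, cross_anticomm]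

end ThreeSpace

/-- Let `k` be a field of characteristic zero and `f ∈ k[x,y,z]` with
finite Milnor number.  Every quasiclassical datum `(p, S)`, consisting of `p ∈ k[x,y,z]`
and a bivector field `S` with `[f, S] = 0`, automatically satisfies `[S, S] = 0` and
`[p, S]` lies in the image of `ad_f` on bivectors, i.e. there is a bivector `S₂` with
`[p, S] = [f, S₂]`: every first-order noncommutative unfolding of `f` given by `(p, S)`
extends to second order. -/
theorem unfolding_stmt15 (K : Type*) [Field K] [CharZero K]
    (f : MvPolynomial (Fin 3) K)
    (hμ : FiniteDimensional K
      (MvPolynomial (Fin 3) K ⧸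
        Ideal.span (Set.range fun i : Fin 3 => pderiv i f)))
    (p : MvPolynomial (Fin 3) K)
    (S : Fin 3 → Fin 3 → MvPolynomial (Fin 3) K) (hSalt : IsAltBiv S)
    (hfS : ∀ j, schFnBiv f S j = 0) :
    (∀ i j l, schBivBiv S i j l = 0) ∧
    ∃ S₂ : Fin 3 → Fin 3 → MvPolynomial (Fin 3) K,
      IsAltBiv S₂ ∧ ∀ j, schFnBiv p S j = schFnBiv f S₂ j := by
  have hcop : ∀ q, (∀ i, q ∣ grad f i) → IsUnit q := fun q hq =>
    isUnit_of_forall_dvd_of_finite_quotient (s := Set.range fun i => pderiv i f)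
      (by rintro _ ⟨i, rfl⟩; exact hq i)
  have hS : S = bivOfVec ![S 1 2, S 2 0, S 0 1] := eq_bivOfVec_of_isAltBiv hSalt
  have hcross : ![S 1 2, S 2 0, S 0 1] ⨯₃ grad f = 0 := by
    rw [← schFnBiv_bivOfVec, ← hS]
    exact funext hfS
  obtain ⟨g, hg⟩ := exists_eq_smul_of_mul_eq_mul hcop (mul_eq_mul_of_cross_eq_zero hcross)
  rw [hS, hg]
  exact ⟨schBivBiv_bivOfVec_smul_grad f g, bivOfVec (-(g • grad p)), isAltBiv_bivOfVec _,
    congrFun (schFnBiv_bivOfVec_smul_grad f g p)⟩
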